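/- arXiv:2405.07242 — 2 statements merged into one kernel-verified Lean document; each statement's English description precedes it below -/
import Mathlib

section
/- Let n = ρ1 + ρ2 + w. Suppose H_x = [I_{ρ1} | A_x | B_x] is a ρ1 × n matrix over 𝔽₂ and H_z = [K | L | M] is a ρ2 × n matrix over 𝔽₂, both with column blocks of sizes ρ1, ρ2, w, and suppose H_x · H_zᵀ = 0. Define the n × n matrix E over 𝔽₂ in 3 × 3 block form (block sizes ρ1, ρ2, w) as E = [[I_{ρ1}, A_x, B_x], [0, I_{ρ2}, 0], [0, 0, I_w]]. Then H_z · Eᵀ = [0 | L | M]; that is, the CNOT layer that nulls the A_x, B_x blocks of H_x simultaneously nulls the first ρ1 columns of H_z. -/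
open Matrix

/-! Write `H_x = [I | C]` and `H_z = [K | W]`. Then `H_x · H_zᵀ = Kᵀ + C Wᵀ`, while
`H_z · Eᵀ = [K + W Cᵀ | W]`; the first block is the transpose of the second expression,
so the CSS condition kills it. -/

variable {R m n p : Type*} [Fintype m] [Fintype n] [DecidableEq m]

theorem fromCols_one_mul_transpose_fromCols [Semiring R]
    (C : Matrix m n R) (K : Matrix p m R) (W : Matrix p n R) :
    fromCols (1 : Matrix m m R) C * (fromCols K W)ᵀ = Kᵀ + C * Wᵀ := by
  rw [transpose_fromCols, fromCols_mul_fromRows, Matrix.one_mul]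

theorem fromCols_mul_transpose_fromBlocks_one_zero_one [Semiring R] [DecidableEq n]
    (C : Matrix m n R) (K : Matrix p m R) (W : Matrix p n R) :
    fromCols K W * (fromBlocks 1 C 0 1 : Matrix (m ⊕ n) (m ⊕ n) R)ᵀ =
      fromCols (K + W * Cᵀ) W := by
  rw [fromBlocks_transpose, transpose_one, transpose_one, transpose_zero,
    fromCols_mul_fromBlocks, Matrix.mul_one, Matrix.mul_zero, zero_add, Matrix.mul_one]

theorem fromCols_mul_transpose_fromBlocks_eq_fromCols_zero [CommSemiring R] [DecidableEq n]
    (C : Matrix m n R) (K : Matrix p m R) (W : Matrix p n R)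
    (h : fromCols (1 : Matrix m m R) C * (fromCols K W)ᵀ = 0) :
    fromCols K W * (fromBlocks 1 C 0 1 : Matrix (m ⊕ n) (m ⊕ n) R)ᵀ = fromCols 0 W := by
  rw [fromCols_one_mul_transpose_fromCols] at h
  have hK : K + W * Cᵀ = 0 := by
    simpa only [transpose_add, transpose_mul, transpose_transpose, transpose_zero] using
      congrArg transpose h
  rw [fromCols_mul_transpose_fromBlocks_one_zero_one, hK]

/-- Appendix A.1 of the paper. If `H_x = [I | A_x | B_x]` and
`H_z = [K | L | M]` satisfy the CSS condition `H_x · H_zᵀ = 0`, then the CNOT layer with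
column-operation matrix `E = [[I, A_x, B_x], [0, I, 0], [0, 0, I]]` acting on the
Z-stabilizer matrix as `H_z ↦ H_z · Eᵀ` nulls the first `ρ1` columns of `H_z`:
`H_z · Eᵀ = [0 | L | M]`. -/
theorem cnot_layer_nulls_Z_first_columns (ρ1 ρ2 w : ℕ)
    (Ax : Matrix (Fin ρ1) (Fin ρ2) (ZMod 2)) (Bx : Matrix (Fin ρ1) (Fin w) (ZMod 2))
    (K : Matrix (Fin ρ2) (Fin ρ1) (ZMod 2)) (L : Matrix (Fin ρ2) (Fin ρ2) (ZMod 2))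
    (M : Matrix (Fin ρ2) (Fin w) (ZMod 2))
    (h : fromCols (1 : Matrix (Fin ρ1) (Fin ρ1) (ZMod 2)) (fromCols Ax Bx) *
        (fromCols K (fromCols L M))ᵀ = 0) :
    fromCols K (fromCols L M) *
      (fromBlocks (1 : Matrix (Fin ρ1) (Fin ρ1) (ZMod 2)) (fromCols Ax Bx)
        (0 : Matrix (Fin ρ2 ⊕ Fin w) (Fin ρ1) (ZMod 2))
        (fromBlocks (1 : Matrix (Fin ρ2) (Fin ρ2) (ZMod 2)) 0 0
          (1 : Matrix (Fin w) (Fin w) (ZMod 2))))ᵀ =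
      fromCols (0 : Matrix (Fin ρ2) (Fin ρ1) (ZMod 2)) (fromCols L M) := by
  rw [fromBlocks_one]
  exact fromCols_mul_transpose_fromBlocks_eq_fromCols_zero _ _ _ h
end

section
/- Let H_x be a ρ1 × n matrix and H_z a ρ2 × n matrix over 𝔽₂, and let i, j : Fin n with i ≠ j. Define E = I_n + stdBasisMatrix i j 1 and F = I_n + stdBasisMatrix j i 1 (n × n matrices over 𝔽₂). Then (H_x · E) · (H_z · F)ᵀ = H_x · H_zᵀ. In particular, if H_x · H_zᵀ = 0 then (H_x · E) · (H_z · F)ᵀ = 0. -/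
/-! The CNOT column operations are right multiplication by the transvections
`E = transvection i j 1` and `F = transvection j i 1`. Since `Fᵀ = transvection i j 1` and
transvections at a fixed off-diagonal position compose by adding their parameters,
`E * Fᵀ = transvection i j (1 + 1) = 1` over `𝔽₂`, so `(Hx * E) * (Hz * F)ᵀ = Hx * Hzᵀ`. -/

open Matrix

namespace Matrix

variable {n R : Type*} [DecidableEq n] [CommRing R]

theorem transpose_transvection (i j : n) (c : R) :
    (transvection i j c)ᵀ = transvection j i c := by
  simp only [transvection, transpose_add, transpose_one, transpose_single]

theorem mul_transvection_mul_transpose_mul_transvection [Fintype n] {m l : Type*}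
    (A : Matrix m n R) (B : Matrix l n R) {i j : n} (hij : i ≠ j) {c d : R} (hcd : c + d = 0) :
    A * transvection i j c * (B * transvection j i d)ᵀ = A * Bᵀ := by
  rw [transpose_mul, transpose_transvection, Matrix.mul_assoc,
    ← Matrix.mul_assoc (transvection i j c),
    transvection_mul_transvection_same i j hij, hcd, transvection_zero, Matrix.one_mul]

end Matrix

/-- A CNOT gate with control `i` and target `j` acts on the X-stabilizer
matrix by the column operation `H_x ↦ H_x · (1 + E_{ij})` and on the Z-stabilizer matrix by
`H_z ↦ H_z · (1 + E_{ji})`. These paired column operations preserve the CSS commutation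
condition: `(H_x · E) · (H_z · F)ᵀ = H_x · H_zᵀ`; in particular they preserve
`H_x · H_zᵀ = 0`. -/
theorem cnot_preserves_css_condition (n ρ1 ρ2 : ℕ)
    (Hx : Matrix (Fin ρ1) (Fin n) (ZMod 2)) (Hz : Matrix (Fin ρ2) (Fin n) (ZMod 2))
    (i j : Fin n) (hij : i ≠ j) :
    (Hx * (1 + Matrix.single i j (1 : ZMod 2))) *
        (Hz * (1 + Matrix.single j i (1 : ZMod 2)))ᵀ = Hx * Hzᵀ ∧
      (Hx * Hzᵀ = 0 →
        (Hx * (1 + Matrix.single i j (1 : ZMod 2))) *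
          (Hz * (1 + Matrix.single j i (1 : ZMod 2)))ᵀ = 0) := by
  have preserved :
      Hx * transvection i j (1 : ZMod 2) * (Hz * transvection j i (1 : ZMod 2))ᵀ = Hx * Hzᵀ :=
    mul_transvection_mul_transpose_mul_transvection Hx Hz hij (by decide)
  exact ⟨preserved, fun hcss => preserved.trans hcss⟩
end
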